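/- Let f ∈ ℂ[z] be a polynomial of degree d > 1. Then sup_{z∈ℂ} |(1/2)·log(1+|z|²) − g_f(z)| < ∞; that is, the function z ↦ log(1/[z,∞]) − g_f(z) is bounded on ℂ. -/

import Mathlib

/-! The function `w ↦ log⁺ ‖f w‖ - d · log⁺ ‖w‖` is continuous and tends to `log ‖a_d‖` at infinity
(`a_d` the leading coefficient), so it is bounded, say by `C`. Along an orbit `w = fⁿ(z)` this
bounds the increments of `d⁻ⁿ · log⁺ ‖fⁿ(z)‖` by `C / dⁿ⁺¹`, so `g_f` stays within `C / (d - 1)` of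
`log⁺ ‖z‖`, which is within `½ · log 2` of `½ · log (1 + ‖z‖²)`. -/

open Polynomial MeasureTheory Filter

/-- The `n`-th iterate of a polynomial `f` (as a polynomial). -/
noncomputable def polyIter (f : Polynomial ℂ) : ℕ → Polynomial ℂ
  | 0 => Polynomial.X
  | n + 1 => f.comp (polyIter f n)

open Asymptotics Topology Bornology Real

namespace Polynomial

variable {𝕜 : Type*} [NormedField 𝕜] {f : 𝕜[X]}

theorem tendsto_norm_eval_div_pow_cobounded (hf : f ≠ 0) :
    Tendsto (fun w => ‖f.eval w‖ / ‖w‖ ^ f.natDegree) (cobounded 𝕜) (𝓝 ‖f.leadingCoeff‖) := by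
  have ha : f.leadingCoeff ≠ 0 := leadingCoeff_ne_zero.2 hf
  have hv : ∀ᶠ w in cobounded 𝕜, f.leadingCoeff * w ^ f.natDegree ≠ 0 := by
    filter_upwards [eventually_ne_cobounded 0] with w hw using mul_ne_zero ha (pow_ne_zero _ hw)
  have hquot := ((isEquivalent_iff_tendsto_one hv).1 isEquivalent_cobounded_leading_monomial).norm
  rw [norm_one] at hquot
  have := hquot.mul_const ‖f.leadingCoeff‖
  rw [one_mul] at this
  refine this.congr' ?_
  filter_upwards [eventually_ne_cobounded 0] with w hw
  simp only [Pi.div_apply, norm_div, norm_mul, norm_pow]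
  field_simp

theorem tendsto_log_max_one_norm_eval_sub_cobounded (hf : 0 < f.natDegree) :
    Tendsto (fun w => log (max 1 ‖f.eval w‖) - f.natDegree * log (max 1 ‖w‖)) (cobounded 𝕜)
      (𝓝 (log ‖f.leadingCoeff‖)) := by
  have hf0 : f ≠ 0 := ne_zero_of_natDegree_gt hf
  have hnorm :=
    f.tendsto_norm_atTop (natDegree_pos_iff_degree_pos.1 hf) tendsto_norm_cobounded_atTop
  refine ((tendsto_norm_eval_div_pow_cobounded hf0).log
    (norm_ne_zero_iff.2 (leadingCoeff_ne_zero.2 hf0))).congr' ?_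
  filter_upwards [hnorm.eventually_ge_atTop 1, tendsto_norm_cobounded_atTop.eventually_ge_atTop 1]
    with w hfw hw
  rw [max_eq_right hfw, max_eq_right hw, log_div (by positivity) (by positivity), log_pow]

theorem exists_abs_log_max_one_norm_eval_sub_le [ProperSpace 𝕜] (hf : 0 < f.natDegree) :
    ∃ C, ∀ w : 𝕜, |log (max 1 ‖f.eval w‖) - f.natDegree * log (max 1 ‖w‖)| ≤ C := by
  have hcont : Continuous fun w : 𝕜 => log (max 1 ‖f.eval w‖) - f.natDegree * log (max 1 ‖w‖) := by
    have hlog {u : 𝕜 → ℝ} (hu : Continuous u) : Continuous fun w => log (max 1 (u w)) :=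
      (continuous_const.max hu).log fun _ => by positivity
    exact (hlog f.continuous.norm).sub (continuous_const.mul (hlog continuous_norm))
  have hbdd := hcont.isBounded_range_iff_isBigO.2 <| by
    rw [← Metric.cobounded_eq_cocompact]
    exact (tendsto_log_max_one_norm_eval_sub_cobounded hf).isBigO_one ℝ
  obtain ⟨C, hC⟩ := isBounded_iff_forall_norm_le.1 hbdd
  exact ⟨C, fun w => hC _ ⟨w, rfl⟩⟩

end Polynomial

theorem abs_sub_le_of_tendsto_div_pow {x : ℕ → ℝ} {d C L : ℝ} (hd : 1 < d)
    (hx : ∀ n, |x (n + 1) - d * x n| ≤ C) (hL : Tendsto (fun n => x n / d ^ n) atTop (𝓝 L)) :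
    |x 0 - L| ≤ C / (d - 1) := by
  have hd0 : 0 < d := one_pos.trans hd
  have hstep (n : ℕ) : dist (x n / d ^ n) (x (n + 1) / d ^ (n + 1)) ≤ C / d * d⁻¹ ^ n := by
    have hdiff : x n / d ^ n - x (n + 1) / d ^ (n + 1) = -(x (n + 1) - d * x n) / d ^ (n + 1) := by
      field_simp; ring
    calc dist (x n / d ^ n) (x (n + 1) / d ^ (n + 1))
        = |x (n + 1) - d * x n| / d ^ (n + 1) := by
          rw [Real.dist_eq, hdiff, abs_div, abs_neg, abs_of_pos (pow_pos hd0 _)]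
      _ ≤ C / d ^ (n + 1) := by gcongr; exact hx n
      _ = C / d * d⁻¹ ^ n := by rw [inv_pow, pow_succ']; field_simp
  have := dist_le_of_le_geometric_of_tendsto₀ _ _ (inv_lt_one_of_one_lt₀ hd) hstep hL
  rw [Real.dist_eq, pow_zero, div_one] at this
  convert this using 1
  field_simp

theorem abs_half_log_one_add_sq_sub_log_max_one_le {a : ℝ} (ha : 0 ≤ a) :
    |1 / 2 * log (1 + a ^ 2) - log (max 1 a)| ≤ 1 / 2 * log 2 := by
  have hm : 1 ≤ max 1 a := le_max_left 1 a
  have hlower : max 1 a ^ 2 ≤ 1 + a ^ 2 := by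
    rcases le_total a 1 with h | h
    · rw [max_eq_left h]; nlinarith
    · rw [max_eq_right h]; nlinarith
  have hupper : 1 + a ^ 2 ≤ 2 * max 1 a ^ 2 := by nlinarith [le_max_right 1 a]
  have hq : 1 / 2 * log (1 + a ^ 2) - log (max 1 a)
      = 1 / 2 * log ((1 + a ^ 2) / max 1 a ^ 2) := by
    rw [log_div (by positivity) (by positivity), log_pow]; push_cast; ring
  rw [hq, abs_of_nonneg (by have := log_nonneg ((one_le_div (by positivity)).2 hlower); positivity)]
  gcongr
  rwa [div_le_iff₀ (by positivity)]

theorem eval_polyIter_succ (f : Polynomial ℂ) (n : ℕ) (z : ℂ) :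
    (polyIter f (n + 1)).eval z = f.eval ((polyIter f n).eval z) :=
  eval_comp

theorem stmt14 (f : Polynomial ℂ) (d : ℕ) (hd : 1 < d) (hdeg : f.natDegree = d)
    (g : ℂ → ℝ)
    (hg : ∀ z : ℂ, Tendsto
      (fun n : ℕ => Real.log (max 1 (‖(polyIter f n).eval z‖)) / (d : ℝ) ^ n)
      atTop (nhds (g z))) :
    ∃ M : ℝ, ∀ z : ℂ, |(1 / 2) * Real.log (1 + ‖z‖ ^ 2) - g z| ≤ M := by
  obtain ⟨C, hC⟩ := exists_abs_log_max_one_norm_eval_sub_le (f := f) (by omega)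
  refine ⟨C / (d - 1) + 1 / 2 * log 2, fun z => ?_⟩
  have hgreen : |log (max 1 ‖z‖) - g z| ≤ C / (d - 1) := by
    have := abs_sub_le_of_tendsto_div_pow (by exact_mod_cast hd)
      (fun n => by rw [eval_polyIter_succ, ← hdeg]; exact hC _) (hg z)
    simpa [polyIter] using this
  calc |1 / 2 * log (1 + ‖z‖ ^ 2) - g z|
      ≤ |1 / 2 * log (1 + ‖z‖ ^ 2) - log (max 1 ‖z‖)| + |log (max 1 ‖z‖) - g z| :=
        abs_sub_le _ _ _
    _ ≤ 1 / 2 * log 2 + C / (d - 1) :=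
        add_le_add (abs_half_log_one_add_sq_sub_log_max_one_le (norm_nonneg z)) hgreen
    _ = C / (d - 1) + 1 / 2 * log 2 := add_comm _ _
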